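/- arXiv:1504.00036 — 2 statements merged into one kernel-verified Lean document; each statement's English description precedes it below -/
import Mathlib

section
/- Let k be a field of characteristic not 2 and m ≥ 2 an integer. For λ₁, λ₂ ∈ k̄, the diagonal matrix A = diag(λ₁, λ₂) lies in SL(2, k̄) and Inn_A is an automorphism of SL(2, k̄) of order exactly m if and only if either (a) λ₁ is a primitive 2m-th root of unity and λ₂ = λ₁^{2m-1}, or (b) m is odd, λ₁ is a primitive m-th root of unity, and λ₂ = λ₁^{m-1}. -/
section Aux

variable {K : Type*} [Field K]

lemma aux_conj (a b : K) (hab : a * b = 1)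
    (hcomm : ∀ X : Matrix (Fin 2) (Fin 2) K, X.det = 1 →
      (Matrix.diagonal ![a, b])⁻¹ * X * Matrix.diagonal ![a, b] = X) :
    a = b := by
  have hinv : (Matrix.diagonal ![a, b])⁻¹ = Matrix.diagonal ![b, a] := by
    apply Matrix.inv_eq_left_inv
    ext i j
    fin_cases i <;> fin_cases j <;>
      simp [Matrix.mul_apply, Fin.sum_univ_two, Matrix.diagonal, Matrix.one_apply,
        mul_comm b a, hab]
  have hX : (!![1, 1; 0, 1] : Matrix (Fin 2) (Fin 2) K).det = 1 := by
    simp [Matrix.det_fin_two_of]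
  have h := hcomm !![1, 1; 0, 1] hX
  rw [hinv] at h
  have h01 := congr_fun (congr_fun h 0) 1
  simp [Matrix.mul_apply, Fin.sum_univ_two, Matrix.diagonal] at h01
  have hb2 : b * b = 1 := by simpa using h01
  have : a * (b * b) = a * 1 := by rw [hb2]
  rw [← mul_assoc, hab, one_mul, mul_one] at this
  exact this.symm

lemma aux_conj' (a : K) (ha : a * a = 1)
    (X : Matrix (Fin 2) (Fin 2) K) :
    (Matrix.diagonal ![a, a])⁻¹ * X * Matrix.diagonal ![a, a] = X := by
  have hv : (![a, a] : Fin 2 → K) = fun _ => a := by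
    funext i; fin_cases i <;> rfl
  have hinv : (Matrix.diagonal ![a, a])⁻¹ = Matrix.diagonal ![a, a] := by
    apply Matrix.inv_eq_left_inv
    ext i j
    fin_cases i <;> fin_cases j <;>
      simp [Matrix.mul_apply, Fin.sum_univ_two, Matrix.diagonal, Matrix.one_apply, ha]
  rw [hinv]
  ext i j
  rw [Matrix.mul_diagonal, Matrix.diagonal_mul, hv]
  dsimp only
  calc a * X i j * a = a * a * X i j := by ring
  _ = X i j := by rw [ha, one_mul]

lemma aux_step (a b : K) (hab : a * b = 1) (r : ℕ) :
    (∀ X : Matrix (Fin 2) (Fin 2) K, X.det = 1 →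
      (Matrix.diagonal ![a, b] ^ r)⁻¹ * X * Matrix.diagonal ![a, b] ^ r = X) ↔
      a ^ (2 * r) = 1 := by
  have hpowr : Matrix.diagonal ![a, b] ^ r = Matrix.diagonal ![a ^ r, b ^ r] := by
    have hv : (![a, b] ^ r : Fin 2 → K) = ![a ^ r, b ^ r] := by
      funext i; fin_cases i <;> simp [Pi.pow_apply]
    rw [Matrix.diagonal_pow, hv]
  have habr : a ^ r * b ^ r = 1 := by rw [← mul_pow, hab, one_pow]
  have ha0 : a ≠ 0 := left_ne_zero_of_mul_eq_one hab
  rw [hpowr]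
  constructor
  · intro h
    have he : a ^ r = b ^ r := aux_conj _ _ habr h
    rw [two_mul, pow_add]
    nth_rewrite 2 [he]
    exact habr
  · intro h
    have h2 : a ^ r * a ^ r = 1 := by rw [← pow_add, ← two_mul]; exact h
    have he : a ^ r = b ^ r := mul_left_cancel₀ (pow_ne_zero r ha0) (h2.trans habr.symm)
    have hv : (![a ^ r, b ^ r] : Fin 2 → K) = ![a ^ r, a ^ r] := by rw [he]
    rw [hv]
    intro X _
    exact aux_conj' (a ^ r) h2 X

lemma aux_prim (a : K) (n : ℕ) : IsPrimitiveRoot a n ↔ orderOf a = n := by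
  exact ⟨fun h => h.eq_orderOf.symm, fun h => h ▸ IsPrimitiveRoot.orderOf a⟩

lemma aux_alg (a : K) (m : ℕ) (hm : 2 ≤ m)
    (h : a ^ (2 * m) = 1 ∧ ∀ r, 0 < r → r < m → a ^ (2 * r) ≠ 1) :
    orderOf a = 2 * m ∨ (Odd m ∧ orderOf a = m) := by
  obtain ⟨h1, h2⟩ := h
  have hfin : IsOfFinOrder a :=
    isOfFinOrder_iff_pow_eq_one.mpr ⟨2 * m, by omega, h1⟩
  have hd0 : orderOf a ≠ 0 := hfin.orderOf_pos.ne'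
  have hfin2 : IsOfFinOrder (a ^ 2) :=
    isOfFinOrder_iff_pow_eq_one.mpr ⟨m, by omega, by rw [← pow_mul]; exact h1⟩
  have hom : orderOf (a ^ 2) = m := by
    rw [orderOf_eq_iff (by omega : 0 < m)]
    refine ⟨by rw [← pow_mul]; exact h1, fun r hr hr0 hc => ?_⟩
    exact h2 r hr0 hr (by rw [pow_mul]; exact hc)
  have hop : orderOf (a ^ 2) = orderOf a / Nat.gcd (orderOf a) 2 :=
    hfin.orderOf_pow a 2
  rcases Nat.even_or_odd (orderOf a) with he | ho
  · left
    have hg : Nat.gcd (orderOf a) 2 = 2 := Nat.gcd_eq_right he.two_dvd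
    rw [hg] at hop
    have h2d : 2 ∣ orderOf a := he.two_dvd
    omega
  · right
    have hg : Nat.gcd (orderOf a) 2 = 1 := Nat.coprime_two_right.mpr ho
    rw [hg, Nat.div_one] at hop
    have : orderOf a = m := by omega
    exact ⟨this ▸ ho, this⟩

lemma aux_alg' (a : K) (m : ℕ) (hm : 2 ≤ m)
    (h : orderOf a = 2 * m ∨ (Odd m ∧ orderOf a = m)) :
    a ^ (2 * m) = 1 ∧ ∀ r, 0 < r → r < m → a ^ (2 * r) ≠ 1 := by
  have hfin : IsOfFinOrder a := by
    rw [← orderOf_pos_iff]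
    rcases h with h | ⟨_, h⟩ <;> omega
  have hop : orderOf (a ^ 2) = orderOf a / Nat.gcd (orderOf a) 2 :=
    hfin.orderOf_pow a 2
  have hom : orderOf (a ^ 2) = m := by
    rcases h with h | ⟨hodd, h⟩
    · have hg : Nat.gcd (orderOf a) 2 = 2 := Nat.gcd_eq_right ⟨m, h⟩
      rw [hg, h] at hop
      omega
    · have hg : Nat.gcd (orderOf a) 2 = 1 :=
        Nat.coprime_two_right.mpr (h ▸ hodd)
      rw [hg, Nat.div_one, h] at hop
      exact hop
  have := (orderOf_eq_iff (by omega : 0 < m)).mp hom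
  obtain ⟨h1, h2⟩ := this
  refine ⟨by rw [pow_mul]; exact h1, fun r hr hrm hc => ?_⟩
  exact h2 r hrm hr (by rw [← pow_mul]; exact hc)

end Aux

/-- Characterization of m-valid eigenpairs: `diag(λ₁,λ₂)` lies in `SL(2,k̄)` and
induces an inner automorphism of `SL(2,k̄)` of order exactly `m` iff either
`λ₁` is a primitive `2m`-th root of unity and `λ₂ = λ₁^(2m-1)`, or `m` is odd,
`λ₁` is a primitive `m`-th root of unity and `λ₂ = λ₁^(m-1)`. -/
theorem stmt_4 (k : Type*) [Field k] (hchar : ringChar k ≠ 2)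
    (m : ℕ) (hm : 2 ≤ m) (lam1 lam2 : AlgebraicClosure k)
    (A : Matrix (Fin 2) (Fin 2) (AlgebraicClosure k))
    (hAdef : A = Matrix.diagonal ![lam1, lam2]) :
    (A.det = 1 ∧
      (∀ X : Matrix (Fin 2) (Fin 2) (AlgebraicClosure k), X.det = 1 →
        (A ^ m)⁻¹ * X * A ^ m = X) ∧
      (∀ r : ℕ, 0 < r → r < m →
        ¬ (∀ X : Matrix (Fin 2) (Fin 2) (AlgebraicClosure k), X.det = 1 →
          (A ^ r)⁻¹ * X * A ^ r = X))) ↔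
    ((IsPrimitiveRoot lam1 (2 * m) ∧ lam2 = lam1 ^ (2 * m - 1)) ∨
      (Odd m ∧ IsPrimitiveRoot lam1 m ∧ lam2 = lam1 ^ (m - 1))) := by
  subst hAdef
  have hdet : (Matrix.diagonal ![lam1, lam2]).det = lam1 * lam2 := by
    rw [Matrix.det_diagonal, Fin.prod_univ_two]; simp
  constructor
  · rintro ⟨h1, h2, h3⟩
    rw [hdet] at h1
    have ha0 : lam1 ≠ 0 := left_ne_zero_of_mul_eq_one h1
    have h2' : lam1 ^ (2 * m) = 1 := (aux_step lam1 lam2 h1 m).mp h2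
    have h3' : ∀ r, 0 < r → r < m → lam1 ^ (2 * r) ≠ 1 := fun r hr hrm hc =>
      h3 r hr hrm ((aux_step lam1 lam2 h1 r).mpr hc)
    rcases aux_alg lam1 m hm ⟨h2', h3'⟩ with hd | ⟨hodd, hd⟩
    · left
      refine ⟨(aux_prim lam1 (2 * m)).mpr hd, ?_⟩
      have hcyc : lam1 * lam1 ^ (2 * m - 1) = 1 := by
        rw [← pow_succ']
        have he : 2 * m - 1 + 1 = 2 * m := by omega
        rw [he]; exact h2'
      exact mul_left_cancel₀ ha0 (h1.trans hcyc.symm)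
    · right
      refine ⟨hodd, (aux_prim lam1 m).mpr hd, ?_⟩
      have ham : lam1 ^ m = 1 := by rw [← hd]; exact pow_orderOf_eq_one lam1
      have hcyc : lam1 * lam1 ^ (m - 1) = 1 := by
        rw [← pow_succ']
        have he : m - 1 + 1 = m := by omega
        rw [he]; exact ham
      exact mul_left_cancel₀ ha0 (h1.trans hcyc.symm)
  · rintro (⟨hprim, hb⟩ | ⟨hodd, hprim, hb⟩)
    · have han : lam1 ^ (2 * m) = 1 := hprim.pow_eq_one
      have ha0 : lam1 ≠ 0 := by
        intro h0
        rw [h0, zero_pow (by omega : 2 * m ≠ 0)] at han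
        exact zero_ne_one han
      have hab : lam1 * lam2 = 1 := by
        rw [hb, ← pow_succ']
        have he : 2 * m - 1 + 1 = 2 * m := by omega
        rw [he]; exact han
      obtain ⟨h1', h2'⟩ := aux_alg' lam1 m hm (Or.inl ((aux_prim lam1 (2 * m)).mp hprim))
      exact ⟨by rw [hdet]; exact hab, (aux_step lam1 lam2 hab m).mpr h1',
        fun r hr hrm hc => h2' r hr hrm ((aux_step lam1 lam2 hab r).mp hc)⟩
    · have han : lam1 ^ m = 1 := hprim.pow_eq_one
      have ha0 : lam1 ≠ 0 := by
        intro h0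
        rw [h0, zero_pow (by omega : m ≠ 0)] at han
        exact zero_ne_one han
      have hab : lam1 * lam2 = 1 := by
        rw [hb, ← pow_succ']
        have he : m - 1 + 1 = m := by omega
        rw [he]; exact han
      obtain ⟨h1', h2'⟩ := aux_alg' lam1 m hm (Or.inr ⟨hodd, (aux_prim lam1 m).mp hprim⟩)
      exact ⟨by rw [hdet]; exact hab, (aux_step lam1 lam2 hab m).mpr h1',
        fun r hr hrm hc => h2' r hr hrm ((aux_step lam1 lam2 hab r).mp hc)⟩
end

section
/- Let k be a field of characteristic not 2, α ∈ k nonzero, and let A, B ∈ SL(2, k(√α)) be non-lower-triangular matrices with the same eigenvalues λ₁ ≠ λ₂, both of the form A = [[a, b], [-m(a)/b, -a+λ₁+λ₂]] and B = [[c, d], [-m(c)/d, -c+λ₁+λ₂]] with b, d ≠ 0, where m(x) = x² - (λ₁+λ₂)x + 1. Then Q = [[b/d, 0], [(c-a)/d, 1]] satisfies Q⁻¹AQ = B, and if all entries of A and B are k-multiples of √α, then Q ∈ GL(2, k). -/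
/-- Two non-lower-triangular matrices in `SL(2, k(√α))` of the canonical form
with the same eigenvalues are conjugate via `Q = [[b/d,0],[(c-a)/d,1]]`, and `Q`
has entries in `k` whenever all entries of `A` and `B` are `k`-multiples of `√α`. -/
theorem stmt_16 (k K : Type*) [Field k] [Field K] [Algebra k K]
    (hchar : ringChar k ≠ 2) (α : k) (hα : α ≠ 0)
    (sqrtα : K) (hsq : sqrtα ^ 2 = algebraMap k K α)
    (lam1 lam2 : K) (hne : lam1 ≠ lam2) (hprod : lam1 * lam2 = 1)
    (a b c d : K) (hb : b ≠ 0) (hd : d ≠ 0)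
    (A B Q : Matrix (Fin 2) (Fin 2) K)
    (hAdef : A = !![a, b;
      -(a ^ 2 - (lam1 + lam2) * a + 1) / b, -a + lam1 + lam2])
    (hBdef : B = !![c, d;
      -(c ^ 2 - (lam1 + lam2) * c + 1) / d, -c + lam1 + lam2])
    (hQdef : Q = !![b / d, 0; (c - a) / d, 1]) :
    IsUnit Q.det ∧ Q⁻¹ * A * Q = B ∧
    ((∀ i j, ∃ e : k, A i j = algebraMap k K e * sqrtα) →
     (∀ i j, ∃ e : k, B i j = algebraMap k K e * sqrtα) →
     ∀ i j, ∃ e : k, Q i j = algebraMap k K e) := by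
  have hdet : Q.det = b / d := by
    subst hQdef
    simp [Matrix.det_fin_two_of]
  have hunit : IsUnit Q.det := by
    rw [hdet]
    exact (div_ne_zero hb hd).isUnit
  refine ⟨hunit, ?_, ?_⟩
  · have hQB : A * Q = Q * B := by
      subst hAdef hBdef hQdef
      ext i j
      fin_cases i <;> fin_cases j <;>
        simp [Matrix.mul_apply, Fin.sum_univ_succ] <;>
        field_simp <;> ring
    rw [Matrix.mul_assoc, hQB, ← Matrix.mul_assoc, Matrix.nonsing_inv_mul Q hunit,
      Matrix.one_mul]
  · intro hA hB
    have hs : sqrtα ≠ 0 := by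
      intro h
      apply hα
      have : algebraMap k K α = 0 := by rw [← hsq, h]; ring
      exact (map_eq_zero _).mp this
    obtain ⟨ea, hea⟩ := hA 0 0
    obtain ⟨eb, heb⟩ := hA 0 1
    obtain ⟨ec, hec⟩ := hB 0 0
    obtain ⟨ed, hed⟩ := hB 0 1
    rw [hAdef] at hea heb
    rw [hBdef] at hec hed
    simp at hea heb hec hed
    have hedne : (ed : k) ≠ 0 := by
      intro h
      apply hd
      rw [hed, h, map_zero, zero_mul]
    intro i j
    fin_cases i <;> fin_cases j <;> simp [hQdef]
    · exact ⟨eb / ed, by rw [heb, hed, map_div₀,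
        mul_div_mul_right _ _ hs]⟩
    · exact ⟨0, by simp⟩
    · exact ⟨(ec - ea) / ed, by rw [hec, hea, hed, map_div₀, map_sub,
        ← sub_mul, mul_div_mul_right _ _ hs]⟩
    · exact ⟨1, by simp⟩
end
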